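/- Let T be a self-adjoint linear operator on Minkowski space ℝ^n (n ≥ 2) whose characteristic polynomial splits over ℝ (T has a real spectrum). Then T is not diagonalizable over ℝ if and only if T has a unique null eigendirection, i.e. there exists a null eigenvector x of T and every null eigenvector of T is a scalar multiple of x. -/

import Mathlib

/-- The Minkowski scalar product on `ℝⁿ`:
`⟪x, y⟫ = -x 0 * y 0 + ∑_{i ≥ 1} x i * y i`. -/
def mink (n : ℕ) (x y : Fin n → ℝ) : ℝ :=
  ∑ i : Fin n, (if (i : ℕ) = 0 then (-1 : ℝ) else 1) * x i * y i

namespace MinkAux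

open Polynomial

lemma mink_comm (n : ℕ) (x y : Fin n → ℝ) : mink n x y = mink n y x := by
  unfold mink; apply Finset.sum_congr rfl; intros; ring

lemma mink_add_right (n : ℕ) (x y z : Fin n → ℝ) :
    mink n x (y + z) = mink n x y + mink n x z := by
  unfold mink; rw [← Finset.sum_add_distrib]
  apply Finset.sum_congr rfl
  intros; simp only [Pi.add_apply, Pi.sub_apply]; split <;> ring

lemma mink_sub_right (n : ℕ) (x y z : Fin n → ℝ) :
    mink n x (y - z) = mink n x y - mink n x z := by
  unfold mink; rw [← Finset.sum_sub_distrib]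
  apply Finset.sum_congr rfl
  intros; simp only [Pi.add_apply, Pi.sub_apply]; split <;> ring

lemma mink_smul_right (n : ℕ) (c : ℝ) (x y : Fin n → ℝ) :
    mink n x (c • y) = c * mink n x y := by
  unfold mink; rw [Finset.mul_sum]
  apply Finset.sum_congr rfl
  intros; simp only [Pi.smul_apply, smul_eq_mul]; split <;> ring

lemma mink_add_left (n : ℕ) (x y z : Fin n → ℝ) :
    mink n (x + y) z = mink n x z + mink n y z := by
  rw [mink_comm, mink_add_right, mink_comm n z x, mink_comm n z y]

lemma mink_sub_left (n : ℕ) (x y z : Fin n → ℝ) :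
    mink n (x - y) z = mink n x z - mink n y z := by
  rw [mink_comm, mink_sub_right, mink_comm n z x, mink_comm n z y]

lemma mink_smul_left (n : ℕ) (c : ℝ) (x y : Fin n → ℝ) :
    mink n (c • x) y = c * mink n x y := by
  rw [mink_comm, mink_smul_right, mink_comm]

lemma mink_zero_right (n : ℕ) (x : Fin n → ℝ) : mink n x 0 = 0 := by
  unfold mink; apply Finset.sum_eq_zero; intros; simp

lemma mink_sum_right (n : ℕ) {ι : Type*} (s : Finset ι) (x : Fin n → ℝ)
    (f : ι → (Fin n → ℝ)) :
    mink n x (∑ j ∈ s, f j) = ∑ j ∈ s, mink n x (f j) := by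
  classical
  induction s using Finset.induction_on with
  | empty => simp [mink_zero_right]
  | insert _ _ h ih =>
      rw [Finset.sum_insert h, Finset.sum_insert h, mink_add_right, ih]

/-- If the time component vanishes and the norm is nonpositive, the vector is zero. -/
lemma eq_zero_of_time_zero (n : ℕ) (hn : 0 < n) (x : Fin n → ℝ)
    (h0 : x ⟨0, hn⟩ = 0) (h : mink n x x ≤ 0) : x = 0 := by
  have key : ∀ i : Fin n, (if (i : ℕ) = 0 then (-1 : ℝ) else 1) * x i * x i = 0 := by
    intro i
    have hnn : ∀ j ∈ Finset.univ, (0:ℝ) ≤ (if ((j : Fin n) : ℕ) = 0 then (-1 : ℝ) else 1) * x j * x j := by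
      intro j _
      by_cases hj : (j : ℕ) = 0
      · have : j = ⟨0, hn⟩ := Fin.ext hj
        simp [this, h0]
      · simpa [hj] using mul_self_nonneg (x j)
    have hsum : mink n x x = 0 := le_antisymm h (Finset.sum_nonneg hnn)
    exact (Finset.sum_eq_zero_iff_of_nonneg hnn).mp hsum i (Finset.mem_univ i)
  funext i
  have := key i
  by_cases hi : (i : ℕ) = 0 <;> simp [hi] at this <;> simpa using this

/-- Two vectors of nonpositive norm that are orthogonal are proportional. -/
lemma proportional (n : ℕ) (hn : 0 < n) (u v : Fin n → ℝ) (hu : u ≠ 0)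
    (huu : mink n u u ≤ 0) (hvv : mink n v v ≤ 0) (huv : mink n u v = 0) :
    ∃ c : ℝ, v = c • u := by
  have hu0 : u ⟨0, hn⟩ ≠ 0 := by
    intro h; exact hu (eq_zero_of_time_zero n hn u h huu)
  set c : ℝ := v ⟨0, hn⟩ / u ⟨0, hn⟩ with hc
  refine ⟨c, ?_⟩
  have hw : v - c • u = 0 := by
    apply eq_zero_of_time_zero n hn
    · simp [Pi.sub_apply, Pi.smul_apply, smul_eq_mul, hc]
      field_simp
      ring
    · have expand : mink n (v - c • u) (v - c • u)
          = mink n v v - 2 * c * mink n u v + c ^ 2 * mink n u u := by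
        rw [mink_sub_left, mink_sub_right, mink_sub_right, mink_smul_left,
          mink_smul_right, mink_smul_left, mink_smul_right, mink_comm n v u]
        ring
      rw [expand, huv]
      nlinarith [sq_nonneg c]
  exact sub_eq_zero.mp hw

/-- Pairing a vector against its "Euclidean conjugate" is positive. -/
lemma mink_conj_pos (n : ℕ) (x : Fin n → ℝ) (hx : x ≠ 0) :
    0 < mink n x (fun i => (if (i : ℕ) = 0 then (-1 : ℝ) else 1) * x i) := by
  unfold mink
  have hterm : ∀ i : Fin n,
      (if (i : ℕ) = 0 then (-1:ℝ) else 1) * x i *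
        ((if (i : ℕ) = 0 then (-1:ℝ) else 1) * x i) = x i ^ 2 := by
    intro i; split <;> ring
  rw [Finset.sum_congr rfl fun i _ => hterm i]
  obtain ⟨i, hi⟩ := Function.ne_iff.mp hx
  apply Finset.sum_pos' (fun j _ => sq_nonneg (x j))
  exact ⟨i, Finset.mem_univ i, by simpa using pow_two_pos_of_ne_zero (by simpa using hi)⟩

/-- Iterated self-adjointness. -/
lemma pow_adjoint (n : ℕ) (N : Module.End ℝ (Fin n → ℝ))
    (hN : ∀ a b, mink n (N a) b = mink n a (N b)) (k : ℕ) (a b : Fin n → ℝ) :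
    mink n ((N ^ k) a) b = mink n a ((N ^ k) b) := by
  induction k generalizing a b with
  | zero => simp [Module.End.one_apply]
  | succ k ih =>
      have h1 : (N ^ (k+1)) a = (N ^ k) (N a) := by
        rw [pow_succ]; rfl
      have h2 : (N ^ (k+1)) b = N ((N ^ k) b) := by
        rw [pow_succ']; rfl
      rw [h1, h2, ih, hN]

lemma ker_pow_le_span {n : ℕ} (T : Module.End ℝ (Fin n → ℝ))
    (H : ∀ (μ : ℝ) (v : Fin n → ℝ) (m : ℕ), ((T - μ • 1) ^ m) v = 0 → (T - μ • 1) v = 0)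
    (s : Finset ℝ) (k : ℝ → ℕ) :
    LinearMap.ker (Polynomial.aeval T (∏ μ ∈ s, (X - C μ) ^ (k μ))) ≤
      Submodule.span ℝ {v : Fin n → ℝ | ∃ μ : ℝ, T v = μ • v} := by
  induction s using Finset.induction_on with
  | empty =>
      simp only [Finset.prod_empty, map_one]
      intro v hv
      simp only [LinearMap.mem_ker, Module.End.one_apply] at hv
      simp [hv]
  | insert _ _ hμs ih =>
      rename_i μ s
      have hcop : IsCoprime ((X - C μ) ^ (k μ)) (∏ ν ∈ s, (X - C ν) ^ (k ν)) := by
        apply IsCoprime.prod_right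
        intro ν hν
        have hne : μ ≠ ν := by rintro rfl; exact hμs hν
        exact (Polynomial.isCoprime_X_sub_C_of_isUnit_sub
          (sub_ne_zero_of_ne hne).isUnit).pow
      rw [Finset.prod_insert hμs, ← Polynomial.sup_ker_aeval_eq_ker_aeval_mul_of_coprime T hcop]
      refine sup_le ?_ ih
      intro v hv
      simp only [LinearMap.mem_ker, map_pow, map_sub, aeval_X, aeval_C,
        Module.algebraMap_end_eq_smul_id] at hv
      have h1 : (T - μ • 1) v = 0 := by
        apply H μ v (k μ)
        exact hv
      apply Submodule.subset_span
      refine ⟨μ, ?_⟩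
      have h2 : T v - μ • v = 0 := by
        simpa [LinearMap.sub_apply] using h1
      exact sub_eq_zero.mp h2

lemma span_eig_eq_top {n : ℕ} (T : Module.End ℝ (Fin n → ℝ))
    (hsplit : Polynomial.Splits (LinearMap.charpoly T))
    (H : ∀ (μ : ℝ) (v : Fin n → ℝ) (m : ℕ), ((T - μ • 1) ^ m) v = 0 → (T - μ • 1) v = 0) :
    Submodule.span ℝ {v : Fin n → ℝ | ∃ μ : ℝ, T v = μ • v} = ⊤ := by
  have hmonic := LinearMap.charpoly_monic T
  have hfac := hsplit.eq_prod_roots_of_monic hmonic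
  have hfac2 : ((LinearMap.charpoly T).roots.map fun a => X - C a).prod
      = ∏ μ ∈ (LinearMap.charpoly T).roots.toFinset,
          (X - C μ) ^ ((LinearMap.charpoly T).roots.count μ) :=
    Finset.prod_multiset_map_count _ _
  have hker : LinearMap.ker (Polynomial.aeval T (LinearMap.charpoly T)) = ⊤ := by
    rw [LinearMap.aeval_self_charpoly]; exact LinearMap.ker_zero
  rw [eq_top_iff, ← hker]
  calc LinearMap.ker (Polynomial.aeval T (LinearMap.charpoly T))
      = LinearMap.ker (Polynomial.aeval T (∏ μ ∈ (LinearMap.charpoly T).roots.toFinset,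
          (X - C μ) ^ ((LinearMap.charpoly T).roots.count μ))) := by rw [← hfac2, ← hfac]
    _ ≤ _ := ker_pow_le_span T H _ _

lemma exists_eigenbasis {n : ℕ} (T : Module.End ℝ (Fin n → ℝ))
    (hsplit : Polynomial.Splits (LinearMap.charpoly T))
    (H : ∀ (μ : ℝ) (v : Fin n → ℝ) (m : ℕ), ((T - μ • 1) ^ m) v = 0 → (T - μ • 1) v = 0) :
    ∃ b : Module.Basis (Fin n) ℝ (Fin n → ℝ), ∀ i, ∃ μ : ℝ, T (b i) = μ • b i := by
  have hspan := span_eig_eq_top T hsplit H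
  obtain ⟨b, hbS, hspanb, hli⟩ :=
    exists_linearIndependent ℝ {v : Fin n → ℝ | ∃ μ : ℝ, T v = μ • v}
  have hsp : ⊤ ≤ Submodule.span ℝ (Set.range ((↑) : b → Fin n → ℝ)) := by
    rw [Subtype.range_coe, hspanb, hspan]
  let B : Module.Basis b ℝ (Fin n → ℝ) := Module.Basis.mk hli hsp
  haveI : Fintype b := FiniteDimensional.fintypeBasisIndex B
  let e : b ≃ Fin n := B.indexEquiv (Pi.basisFun ℝ (Fin n))
  refine ⟨B.reindex e, fun i => ?_⟩
  have hB : (B.reindex e) i = ↑(e.symm i) := by rw [Module.Basis.reindex_apply, Module.Basis.mk_apply]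
  rw [hB]
  exact hbS (e.symm i).2

end MinkAux

open MinkAux

/-- Let `T` be a self-adjoint operator on Minkowski space `ℝⁿ`
(`n ≥ 2`) whose characteristic polynomial splits over `ℝ` (real spectrum).  Then `T`
is *not* diagonalizable over `ℝ` iff `T` has a unique null eigendirection, i.e. there
is a null eigenvector `x` of `T` such that every null eigenvector of `T` is a scalar
multiple of `x`. -/
theorem minkowski_not_diagonalizable_iff_unique_null_eigendirection
    (n : ℕ) (hn : 2 ≤ n) (T : (Fin n → ℝ) →ₗ[ℝ] (Fin n → ℝ))
    (hT : ∀ x y, mink n (T x) y = mink n x (T y))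
    (hsplit : Polynomial.Splits (LinearMap.charpoly T)) :
    (¬ ∃ b : Module.Basis (Fin n) ℝ (Fin n → ℝ), ∀ i, ∃ μ : ℝ, T (b i) = μ • b i) ↔
      ∃ x : Fin n → ℝ, x ≠ 0 ∧ mink n x x = 0 ∧ (∃ μ : ℝ, T x = μ • x) ∧
        ∀ y : Fin n → ℝ, y ≠ 0 → mink n y y = 0 → (∃ ν : ℝ, T y = ν • y) →
          ∃ c : ℝ, y = c • x := by
  have hnpos : 0 < n := by omega
  constructor
  · -- not diagonalizable → unique null eigendirection
    intro hnd
    by_cases H : ∀ (μ : ℝ) (v : Fin n → ℝ) (m : ℕ),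
        ((T - μ • 1) ^ m) v = 0 → (T - μ • 1) v = 0
    · exact absurd (exists_eigenbasis T hsplit H) hnd
    push_neg at H
    obtain ⟨μ0, v, m, hm, hv⟩ := H
    set N : Module.End ℝ (Fin n → ℝ) := T - μ0 • 1 with hN
    have hNapp : ∀ a, N a = T a - μ0 • a := by
      intro a; simp [hN, LinearMap.sub_apply]
    have hNadj : ∀ a b, mink n (N a) b = mink n a (N b) := by
      intro a b
      rw [hNapp, hNapp, mink_sub_left, mink_sub_right, mink_smul_left, mink_smul_right, hT]
    have hv0 : v ≠ 0 := by
      rintro rfl; exact hv (map_zero N)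
    have hex : ∃ j, (N ^ j) v = 0 := ⟨m, hm⟩
    set k := Nat.find hex with hkdef
    have hk : (N ^ k) v = 0 := Nat.find_spec hex
    have hk0 : k ≠ 0 := by
      intro h; rw [h, pow_zero] at hk; exact hv0 hk
    have hk1 : k ≠ 1 := by
      intro h; rw [h, pow_one] at hk; exact hv hk
    have hk2 : 2 ≤ k := by omega
    set j := k - 1 with hjdef
    have hj1 : 1 ≤ j := by omega
    have hjk : j + 1 = k := by omega
    have hjne : (N ^ j) v ≠ 0 := Nat.find_min hex (by omega)
    have hjs : (N ^ (j + 1)) v = 0 := by rw [hjk]; exact hk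
    set x := (N ^ j) v with hxdef
    have hNx : N x = 0 := by
      have : (N ^ (j + 1)) v = N ((N ^ j) v) := by rw [pow_succ']; rfl
      rw [hxdef, ← this, hjs]
    have hTx : T x = μ0 • x := by
      have := hNapp x; rw [hNx] at this
      exact (sub_eq_zero.mp this.symm)
    have hxx : mink n x x = 0 := by
      have h1 : mink n ((N ^ j) v) x = mink n v ((N ^ j) x) := pow_adjoint n N hNadj j v x
      have h2 : (N ^ j) x = 0 := by
        rw [hxdef, ← Module.End.mul_apply, ← pow_add]
        have : j + j = (j - 1) + (j + 1) := by omega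
        rw [this, pow_add, Module.End.mul_apply, hjs, map_zero]
      rw [hxdef] at h2 ⊢
      rw [h1]  -- careful
      rw [h2, mink_zero_right]
    refine ⟨x, hjne, hxx, ⟨μ0, hTx⟩, ?_⟩
    rintro y hy0 hyy ⟨ν, hν⟩
    have hxy : mink n x y = 0 := by
      by_cases hcase : ν = μ0
      · have hNy : N y = 0 := by
          rw [hNapp, hν, hcase, sub_self]
        have hNjy : (N ^ j) y = 0 := by
          have : j = (j - 1) + 1 := by omega
          rw [this, pow_succ, Module.End.mul_apply, hNy, map_zero]
        rw [hxdef, pow_adjoint n N hNadj j v y, hNjy, mink_zero_right]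
      · have heq : mink n (T x) y = mink n x (T y) := hT x y
        rw [hTx, hν, mink_smul_left, mink_smul_right] at heq
        have : (μ0 - ν) * mink n x y = 0 := by linarith
        rcases mul_eq_zero.mp this with h | h
        · exact absurd (by linarith : μ0 = ν) (Ne.symm hcase)
        · exact h
    exact proportional n hnpos x y hjne (le_of_eq hxx) (le_of_eq hyy) hxy
  · -- unique null eigendirection → not diagonalizable
    rintro ⟨x, hx0, hxx, ⟨μ, hμ⟩, huniq⟩ ⟨b, hb⟩
    set w : Fin n → ℝ := fun i => (if (i : ℕ) = 0 then (-1 : ℝ) else 1) * x i with hwdef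
    have hpos : 0 < mink n x w := mink_conj_pos n x hx0
    have hwexp : w = ∑ i, b.repr w i • b i := (Module.Basis.sum_repr b w).symm
    have hsum : mink n x w = ∑ i, b.repr w i * mink n x (b i) := by
      conv_lhs => rw [hwexp]
      rw [mink_sum_right]
      exact Finset.sum_congr rfl fun i _ => mink_smul_right n _ x (b i)
    have hexi : ∃ i, mink n x (b i) ≠ 0 := by
      by_contra hall
      push_neg at hall
      rw [hsum, Finset.sum_eq_zero (fun i _ => by rw [hall i, mul_zero])] at hpos
      exact lt_irrefl 0 hpos
    obtain ⟨i, hib⟩ := hexi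
    obtain ⟨μi, hμi⟩ := hb i
    set y := b i with hy
    have hμeq : μi = μ := by
      have heq : mink n (T x) y = mink n x (T y) := hT x y
      rw [hμ, hμi, mink_smul_left, mink_smul_right] at heq
      by_contra hne
      have : (μ - μi) * mink n x y = 0 := by linarith
      rcases mul_eq_zero.mp this with h | h
      · exact hne (by linarith)
      · exact hib h
    set s : ℝ := -(mink n y y) / (2 * mink n x y) with hs
    set z := s • x + y with hz
    have hz0 : z ≠ 0 := by
      intro h
      have hyx : y = (-s) • x := by
        rw [neg_smul, ← eq_neg_of_add_eq_zero_right (hz ▸ h)]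
      have : mink n x y = 0 := by
        rw [hyx, mink_smul_right, mink_comm, hxx]  -- careful: mink x ((-s)•x) = -s * mink x x
        ring
      exact hib this
    have hzz : mink n z z = 0 := by
      have hexp : mink n z z = 2 * s * mink n x y + mink n y y := by
        rw [hz, mink_add_left, mink_add_right, mink_add_right, mink_smul_left,
          mink_smul_right, mink_smul_left, mink_smul_right, hxx, mink_comm n y x]
        ring
      rw [hexp, hs]
      field_simp
      ring
    have hTz : T z = μ • z := by
      rw [hz, map_add, map_smul, hμ, hμi, hμeq, smul_add, smul_smul, smul_smul, mul_comm]
    obtain ⟨c, hc⟩ := huniq z hz0 hzz ⟨μ, hTz⟩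
    have hyx : y = (c - s) • x := by
      rw [sub_smul, ← hc, hz]
      abel
    have : mink n x y = 0 := by
      rw [hyx, mink_smul_right, hxx, mul_zero]
    exact hib this
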